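/- arXiv:1708.02127 — 4 statements merged into one kernel-verified Lean document; each statement's English description precedes it below -/
import Mathlib

section
/- For β = 1/2, the M-Wright function reduces to a Gaussian density: for all z ∈ ℝ, M_{1/2}(z) = (1/√π) exp(−z²/4). -/
/-- The M-Wright function `M_β(z) = ∑ (-z)ⁿ/(n! Γ(-βn+1-β))`, with `1/Γ` interpreted as the
entire reciprocal Gamma function (Mathlib's `Real.Gamma` vanishes at the poles, so division
by it yields `0` there). -/
noncomputable def mWright (β : ℝ) (z : ℝ) : ℝ :=
  ∑' n : ℕ, (-z) ^ n / (n.factorial * Real.Gamma (-β * n + 1 - β))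

lemma gamma_half_sub (k : ℕ) :
    Real.Gamma (1 / 2 - k) * (2 * k).factorial = Real.sqrt Real.pi * (-4) ^ k * k.factorial := by
  induction k with
  | zero => simpa using Real.Gamma_one_half_eq
  | succ k ih =>
    have hx : (1 / 2 - (k + 1) : ℝ) ≠ 0 := by
      intro h
      have : (k : ℝ) = -1/2 := by linarith
      have := k.cast_nonneg (α := ℝ); linarith
    have hrec : Real.Gamma (1 / 2 - k) = (1 / 2 - (k + 1)) * Real.Gamma (1 / 2 - (k + 1)) := by
      have := Real.Gamma_add_one hx
      have harg : (1 / 2 - (k + 1) : ℝ) + 1 = 1 / 2 - k := by ring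
      rw [harg] at this
      rw [this]
    have hfac : ((2 * (k + 1)).factorial : ℝ)
        = (2 * k + 2) * (2 * k + 1) * (2 * k).factorial := by
      have : 2 * (k + 1) = (2 * k + 1) + 1 := by ring
      rw [this, Nat.factorial_succ, Nat.factorial_succ]
      push_cast; ring
    have hfac' : ((k + 1).factorial : ℝ) = (k + 1) * k.factorial := by
      rw [Nat.factorial_succ]; push_cast; ring
    push_cast [hfac, hfac'] at ih ⊢
    rw [hrec] at ih
    rw [pow_succ]
    apply mul_left_cancel₀ hx
    linear_combination (2 * (k : ℝ) + 2) * (2 * k + 1) * ih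

/-- For `β = 1/2` the M-Wright function reduces to a Gaussian density:
`M_{1/2}(z) = (1/√π) exp(-z²/4)`. -/
theorem mWright_half_eq_gaussian (z : ℝ) :
    mWright (1 / 2) z = (1 / Real.sqrt Real.pi) * Real.exp (-z ^ 2 / 4) := by
  set f : ℕ → ℝ := fun n => (-z) ^ n / (n.factorial * Real.Gamma (-(1/2) * n + 1 - 1/2))
  have hodd : ∀ k : ℕ, f (2 * k + 1) = 0 := by
    intro k
    have harg : (-(1/2) * ((2 * k + 1 : ℕ) : ℝ) + 1 - 1/2) = -(k : ℝ) := by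
      push_cast; ring
    simp only [f, harg, Real.Gamma_neg_nat_eq_zero, mul_zero, div_zero]
  have hsupp : Function.support f ⊆ Set.range (fun k => 2 * k) := by
    intro n hn
    rcases Nat.even_or_odd n with ⟨k, hk⟩ | ⟨k, hk⟩
    · exact ⟨k, by dsimp; omega⟩
    · exact absurd (by rw [hk]; exact hodd k) hn
  have hinj : Function.Injective (fun k : ℕ => 2 * k) := fun a b h => by dsimp at h; omega
  have heven : ∀ k : ℕ, f (2 * k) = (1 / Real.sqrt Real.pi) * ((-z ^ 2 / 4) ^ k / k.factorial) := by
    intro k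
    have harg : (-(1/2) * ((2 * k : ℕ) : ℝ) + 1 - 1/2) = 1 / 2 - k := by
      push_cast; ring
    have hg := gamma_half_sub k
    have hπ : Real.sqrt Real.pi ≠ 0 := by positivity
    have hk : (k.factorial : ℝ) ≠ 0 := by exact_mod_cast k.factorial_ne_zero
    have h4 : ((-4 : ℝ)) ^ k ≠ 0 := by positivity
    have hden : ((2 * k).factorial : ℝ) * Real.Gamma (1 / 2 - k)
        = Real.sqrt Real.pi * (-4) ^ k * k.factorial := by
      rw [mul_comm]; exact hg
    simp only [f, harg]
    rw [hden]
    have hnum : (-z) ^ (2 * k) = (z ^ 2) ^ k := by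
      rw [pow_mul]; ring_nf
    rw [hnum, show (-z ^ 2 / 4 : ℝ) = z ^ 2 / (-4) by ring, div_pow]
    field_simp
    try ring
  have hexp : ∑' k : ℕ, ((-z ^ 2 / 4) ^ k / (k.factorial : ℝ)) = Real.exp (-z ^ 2 / 4) := by
    rw [Real.exp_eq_exp_ℝ, NormedSpace.exp_eq_tsum_div]
  calc mWright (1 / 2) z = ∑' n : ℕ, f n := by rfl
    _ = ∑' k : ℕ, f (2 * k) := (hinj.tsum_eq hsupp).symm
    _ = ∑' k : ℕ, (1 / Real.sqrt Real.pi) * ((-z ^ 2 / 4) ^ k / k.factorial) := by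
        exact tsum_congr heven
    _ = (1 / Real.sqrt Real.pi) * Real.exp (-z ^ 2 / 4) := by rw [tsum_mul_left, hexp]
end

section
/- The kernel R(t,s) = ½(t^α + s^α − |t−s|^α) is positive semi-definite on [0,∞) × [0,∞) for every 0 < α < 2: for all n, all t_1,…,t_n ≥ 0 and all real c_1,…,c_n, ∑_{j,k} c_j c_k R(t_j, t_k) ≥ 0. -/
/-!
For `0 < α < 2` the integral `J = ∫₀^∞ (1 - cos u) u^(-α-1) du` converges and is positive, and the
substitution `u ↦ |x| u` gives `|x|^α J = ∫₀^∞ (1 - cos (x u)) u^(-α-1) du`. The kernel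
`(1 - cos a) + (1 - cos b) - (1 - cos (a - b)) = (1 - cos a)(1 - cos b) + sin a sin b` is a sum of
two products, so integrating it against `u^(-α-1)` turns the quadratic form into
`(2J)⁻¹ ∫₀^∞ ((∑ cⱼ (1 - cos (tⱼ u)))² + (∑ cⱼ sin (tⱼ u))²) u^(-α-1) du ≥ 0`.
-/

open Finset MeasureTheory Set Real

lemma one_sub_cos_add_one_sub_cos_sub_one_sub_cos_sub (a b : ℝ) :
    (1 - cos a) + (1 - cos b) - (1 - cos (a - b))
      = (1 - cos a) * (1 - cos b) + sin a * sin b := by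
  rw [cos_sub]; ring

lemma sum_sum_mul_mul_add_mul_mul_eq_sq_add_sq {ι : Type*} [Fintype ι] (c f g : ι → ℝ) :
    ∑ j, ∑ k, c j * c k * (f j * f k + g j * g k)
      = (∑ j, c j * f j) ^ 2 + (∑ j, c j * g j) ^ 2 := by
  simp only [sq, sum_mul_sum, ← sum_add_distrib]
  exact sum_congr rfl fun j _ => sum_congr rfl fun k _ => by ring

lemma sum_sum_mul_one_sub_cos_nonneg {ι : Type*} [Fintype ι] (c a : ι → ℝ) :
    0 ≤ ∑ j, ∑ k, c j * c k * ((1 - cos (a j)) + (1 - cos (a k)) - (1 - cos (a j - a k))) := by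
  simp only [one_sub_cos_add_one_sub_cos_sub_one_sub_cos_sub,
    sum_sum_mul_mul_add_mul_mul_eq_sq_add_sq]
  positivity

lemma sum_sum_mul_integral_nonneg {ι X : Type*} [Fintype ι] [MeasurableSpace X] {μ : Measure X}
    (c : ι → ℝ) (K : ι → ι → X → ℝ) (hK : ∀ j k, Integrable (K j k) μ)
    (hpos : ∀ᵐ u ∂μ, 0 ≤ ∑ j, ∑ k, c j * c k * K j k u) :
    0 ≤ ∑ j, ∑ k, c j * c k * ∫ u, K j k u ∂μ := by
  have hKc : ∀ j k, Integrable (fun u => c j * c k * K j k u) μ :=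
    fun j k => (hK j k).const_mul _
  simp_rw [← integral_const_mul, ← integral_finsetSum _ fun k _ => hKc _ k]
  rw [← integral_finsetSum _ fun j _ => integrable_finsetSum _ fun k _ => hKc j k]
  exact integral_nonneg_of_ae hpos

theorem sum_sum_mul_integral_one_sub_cos_nonneg {ι : Type*} [Fintype ι] {μ : Measure ℝ}
    {w : ℝ → ℝ} (hw : ∀ᵐ u ∂μ, 0 ≤ w u)
    (hint : ∀ x, Integrable (fun u => (1 - cos (x * u)) * w u) μ) (c t : ι → ℝ) :
    0 ≤ ∑ j, ∑ k, c j * c k *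
      ((∫ u, (1 - cos (t j * u)) * w u ∂μ) + (∫ u, (1 - cos (t k * u)) * w u ∂μ)
        - ∫ u, (1 - cos ((t j - t k) * u)) * w u ∂μ) := by
  have hsplit : ∀ x y, (∫ u, (1 - cos (x * u)) * w u ∂μ) + (∫ u, (1 - cos (y * u)) * w u ∂μ)
      - ∫ u, (1 - cos ((x - y) * u)) * w u ∂μ
      = ∫ u, (1 - cos (x * u)) * w u + (1 - cos (y * u)) * w u
          - (1 - cos ((x - y) * u)) * w u ∂μ := fun x y => by
    rw [integral_sub, integral_add]
    exacts [hint x, hint y, (hint x).add (hint y), hint _]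
  simp only [hsplit]
  refine sum_sum_mul_integral_nonneg c _ (fun j k => ((hint _).add (hint _)).sub (hint _)) ?_
  filter_upwards [hw] with u hu
  have hfactor : ∑ j, ∑ k, c j * c k * ((1 - cos (t j * u)) * w u + (1 - cos (t k * u)) * w u
        - (1 - cos ((t j - t k) * u)) * w u)
      = (∑ j, ∑ k, c j * c k * ((1 - cos (t j * u)) + (1 - cos (t k * u))
        - (1 - cos (t j * u - t k * u)))) * w u := by
    simp only [sum_mul]
    exact sum_congr rfl fun j _ => sum_congr rfl fun k _ => by rw [sub_mul (t j)]; ring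
  rw [hfactor]
  exact mul_nonneg (sum_sum_mul_one_sub_cos_nonneg c (fun j => t j * u)) hu

lemma integrableOn_one_sub_cos_mul_mul_rpow {α : ℝ} (hα₀ : 0 < α) (hα₂ : α < 2) (x : ℝ) :
    IntegrableOn (fun u => (1 - cos (x * u)) * u ^ (-(α + 1))) (Ioi 0) := by
  have hmeas : AEStronglyMeasurable (fun u : ℝ => (1 - cos (x * u)) * u ^ (-(α + 1))) :=
    (by fun_prop : Measurable _).aestronglyMeasurable
  have h0 : IntegrableOn (fun u => (1 - cos (x * u)) * u ^ (-(α + 1))) (Ioc 0 1) := by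
    have hdom : IntegrableOn (fun u : ℝ => x ^ 2 / 2 * u ^ (1 - α)) (Ioc 0 1) :=
      ((intervalIntegral.intervalIntegrable_rpow' (by linarith)).1).const_mul _
    refine hdom.mono' hmeas.restrict ((ae_restrict_mem measurableSet_Ioc).mono fun u hu => ?_)
    have hu : 0 < u := hu.1
    have hcos : 1 - cos (x * u) ≤ (x * u) ^ 2 / 2 := by
      linarith [one_sub_sq_div_two_le_cos (x := x * u)]
    have hpow : u ^ 2 * u ^ (-(α + 1)) = u ^ (1 - α) := by
      rw [← rpow_natCast, ← rpow_add hu]; ring_nf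
    rw [norm_of_nonneg (mul_nonneg (by linarith [cos_le_one (x * u)]) (rpow_nonneg hu.le _))]
    calc (1 - cos (x * u)) * u ^ (-(α + 1)) ≤ (x * u) ^ 2 / 2 * u ^ (-(α + 1)) := by gcongr
      _ = x ^ 2 / 2 * u ^ (1 - α) := by rw [← hpow]; ring
  have h1 : IntegrableOn (fun u => (1 - cos (x * u)) * u ^ (-(α + 1))) (Ioi 1) := by
    have hdom : IntegrableOn (fun u : ℝ => 2 * u ^ (-(α + 1))) (Ioi 1) :=
      (integrableOn_Ioi_rpow_of_lt (by linarith) one_pos).const_mul _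
    refine hdom.mono' hmeas.restrict ((ae_restrict_mem measurableSet_Ioi).mono fun u hu => ?_)
    have hu : (0 : ℝ) < u := one_pos.trans hu
    rw [norm_of_nonneg (mul_nonneg (by linarith [cos_le_one (x * u)]) (rpow_nonneg hu.le _))]
    gcongr
    linarith [neg_one_le_cos (x * u)]
  simpa only [Ioc_union_Ioi_eq_Ioi zero_le_one] using h0.union h1

lemma integral_one_sub_cos_mul_mul_rpow_of_pos {α x : ℝ} (hx : 0 < x) :
    ∫ u in Ioi 0, (1 - cos (x * u)) * u ^ (-(α + 1))
      = x ^ α * ∫ u in Ioi 0, (1 - cos u) * u ^ (-(α + 1)) := by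
  have hscale : ∀ u ∈ Ioi (0 : ℝ), (1 - cos (x * u)) * u ^ (-(α + 1))
      = x ^ (α + 1) * ((1 - cos (x * u)) * (x * u) ^ (-(α + 1))) := by
    intro u hu
    rw [mul_rpow hx.le (le_of_lt hu), rpow_neg hx.le]
    field_simp
  rw [setIntegral_congr_fun measurableSet_Ioi hscale, integral_const_mul,
    integral_comp_mul_left_Ioi (fun v => (1 - cos v) * v ^ (-(α + 1))) 0 hx, mul_zero,
    smul_eq_mul, ← mul_assoc, rpow_add hx, rpow_one, mul_inv_cancel_right₀ hx.ne']

lemma integral_one_sub_cos_mul_mul_rpow {α : ℝ} (hα : α ≠ 0) (x : ℝ) :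
    ∫ u in Ioi 0, (1 - cos (x * u)) * u ^ (-(α + 1))
      = |x| ^ α * ∫ u in Ioi 0, (1 - cos u) * u ^ (-(α + 1)) := by
  rcases lt_trichotomy x 0 with hx | rfl | hx
  · have h := integral_one_sub_cos_mul_mul_rpow_of_pos (α := α) (neg_pos.2 hx)
    simp only [neg_mul, cos_neg] at h
    rw [h, abs_of_neg hx]
  · simp [zero_rpow hα]
  · rw [integral_one_sub_cos_mul_mul_rpow_of_pos hx, abs_of_pos hx]

lemma integral_one_sub_cos_mul_rpow_pos {α : ℝ} (hα₀ : 0 < α) (hα₂ : α < 2) :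
    0 < ∫ u in Ioi 0, (1 - cos u) * u ^ (-(α + 1)) := by
  have hint := integrableOn_one_sub_cos_mul_mul_rpow hα₀ hα₂ 1
  simp only [one_mul] at hint
  have hsub : Ioc (1 : ℝ) 2 ⊆ Ioi 0 := fun u hu => one_pos.trans hu.1
  calc (0 : ℝ) < ∫ u in (1 : ℝ)..2, (1 - cos u) * u ^ (-(α + 1)) := by
        refine intervalIntegral.intervalIntegral_pos_of_pos_on
          ((intervalIntegrable_iff_integrableOn_Ioc_of_le one_le_two).2 (hint.mono_set hsub))
          (fun u hu => mul_pos ?_ (rpow_pos_of_pos (one_pos.trans hu.1) _)) one_lt_two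
        have hcos : cos u < cos 0 :=
          cos_lt_cos_of_nonneg_of_le_pi le_rfl (by linarith [hu.2, pi_gt_three])
            (one_pos.trans hu.1)
        linarith [cos_zero]
    _ = ∫ u in Ioc 1 2, (1 - cos u) * u ^ (-(α + 1)) := intervalIntegral.integral_of_le one_le_two
    _ ≤ ∫ u in Ioi 0, (1 - cos u) * u ^ (-(α + 1)) :=
        setIntegral_mono_set hint
          ((ae_restrict_mem measurableSet_Ioi).mono fun u hu =>
            mul_nonneg (sub_nonneg.2 (cos_le_one u)) (rpow_nonneg (le_of_lt hu) _))
          (Filter.Eventually.of_forall hsub)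

/-- The kernel `R(t,s) = ½(t^α + s^α - |t-s|^α)` is positive semi-definite on
`[0,∞) × [0,∞)` for every `0 < α < 2`. -/
theorem fbm_covariance_posSemidef (α : ℝ) (hα₀ : 0 < α) (hα₂ : α < 2)
    (n : ℕ) (t : Fin n → ℝ) (ht : ∀ j, 0 ≤ t j) (c : Fin n → ℝ) :
    0 ≤ ∑ j, ∑ k,
        c j * c k * ((1 / 2) * (t j ^ α + t k ^ α - |t j - t k| ^ α)) := by
  set J := ∫ u in Ioi 0, (1 - cos u) * u ^ (-(α + 1))
  have hJ : 0 < J := integral_one_sub_cos_mul_rpow_pos hα₀ hα₂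
  have hterm : ∀ j k, (1 / 2) * (t j ^ α + t k ^ α - |t j - t k| ^ α)
      = (2 * J)⁻¹ * ((∫ u in Ioi 0, (1 - cos (t j * u)) * u ^ (-(α + 1)))
          + (∫ u in Ioi 0, (1 - cos (t k * u)) * u ^ (-(α + 1)))
          - ∫ u in Ioi 0, (1 - cos ((t j - t k) * u)) * u ^ (-(α + 1))) := by
    intro j k
    simp only [integral_one_sub_cos_mul_mul_rpow hα₀.ne', abs_of_nonneg (ht _)]
    field_simp
    ring
  simp_rw [hterm, mul_left_comm _ (2 * J)⁻¹, ← mul_sum]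
  refine mul_nonneg (by positivity) (sum_sum_mul_integral_one_sub_cos_nonneg ?_
    (integrableOn_one_sub_cos_mul_mul_rpow hα₀ hα₂) c t)
  exact (ae_restrict_mem measurableSet_Ioi).mono fun u hu => rpow_nonneg (le_of_lt hu) _
end

section
/- The d-dimensional generalized grey Brownian motion B^{β,α} is α/2 self-similar in distribution: for any a > 0, the finite-dimensional characteristic functions of (B^{β,α}(a t_1), …, B^{β,α}(a t_n)) and (a^{α/2} B^{β,α}(t_1), …, a^{α/2} B^{β,α}(t_n)) coincide. -/
open MeasureTheory Finset

/-- The Mittag-Leffler function `E_β(z) = ∑ zⁿ/Γ(βn+1)` (complex version). -/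
noncomputable def mittagLeffler (β : ℝ) (z : ℂ) : ℂ :=
  ∑' n : ℕ, z ^ n / Complex.Gamma ((β * n + 1 : ℝ) : ℂ)

/-!
Both sides are characteristic functions of the process, so by the Mittag-Leffler formula
they are `E_β` evaluated at `-½ ∑ᵢ ‖∑ⱼ kⱼᵢ η(tⱼ)‖²` for suitable times and coefficients.
The fBm covariance `½(tᵅ + sᵅ - |t - s|ᵅ)` is homogeneous of degree `α`, so the Gram matrix
of `η(a t₁), …, η(a tₙ)` is `aᵅ` times that of `η(t₁), …, η(tₙ)`; hence the two arguments of
`E_β` agree once the coefficients are multiplied by `a^{α/2}`.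
-/

section GramMatrix

variable {H : Type*} [NormedAddCommGroup H] [InnerProductSpace ℝ H] {ι : Type*} [Fintype ι]

theorem norm_sum_smul_sq_eq_of_inner_eq {x y : ι → H} {c : ℝ}
    (h : ∀ i j, inner ℝ (x i) (x j) = c * inner ℝ (y i) (y j)) (k : ι → ℝ) :
    ‖∑ i, k i • x i‖ ^ 2 = c * ‖∑ i, k i • y i‖ ^ 2 := by
  simp only [← real_inner_self_eq_norm_sq, sum_inner, inner_sum, real_inner_smul_left,
    real_inner_smul_right, h, mul_sum]
  exact sum_congr rfl fun i _ => sum_congr rfl fun j _ => by ring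

theorem norm_sum_mul_smul_sq (r : ℝ) (k : ι → ℝ) (y : ι → H) :
    ‖∑ i, (r * k i) • y i‖ ^ 2 = r ^ 2 * ‖∑ i, k i • y i‖ ^ 2 := by
  simp only [mul_smul, ← smul_sum, norm_smul, mul_pow, Real.norm_eq_abs, sq_abs]

end GramMatrix

theorem fbmCovariance_mul {α a s u : ℝ} (ha : 0 ≤ a) (hs : 0 ≤ s) (hu : 0 ≤ u) :
    1 / 2 * ((a * s) ^ α + (a * u) ^ α - |a * s - a * u| ^ α) =
      a ^ α * (1 / 2 * (s ^ α + u ^ α - |s - u| ^ α)) := by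
  rw [← mul_sub, abs_mul, abs_of_nonneg ha, Real.mul_rpow ha hs, Real.mul_rpow ha hu,
    Real.mul_rpow ha (abs_nonneg _)]
  ring

section FBmCovariance

variable {H : Type*} [NormedAddCommGroup H] [InnerProductSpace ℝ H] {α : ℝ} {η : ℝ → H}

theorem inner_comp_mul_of_fbmCovariance
    (hcov : ∀ t s : ℝ, 0 ≤ t → 0 ≤ s →
      (inner ℝ (η t) (η s) : ℝ) = (1 / 2) * (t ^ α + s ^ α - |t - s| ^ α))
    {a s u : ℝ} (ha : 0 ≤ a) (hs : 0 ≤ s) (hu : 0 ≤ u) :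
    inner ℝ (η (a * s)) (η (a * u)) = a ^ α * inner ℝ (η s) (η u) := by
  rw [hcov _ _ (mul_nonneg ha hs) (mul_nonneg ha hu), hcov _ _ hs hu, fbmCovariance_mul ha hs hu]

theorem norm_sum_smul_comp_mul_sq_of_fbmCovariance
    (hcov : ∀ t s : ℝ, 0 ≤ t → 0 ≤ s →
      (inner ℝ (η t) (η s) : ℝ) = (1 / 2) * (t ^ α + s ^ α - |t - s| ^ α))
    {n : ℕ} {t : Fin n → ℝ} (ht : ∀ j, 0 ≤ t j) {a : ℝ} (ha : 0 ≤ a) (c : Fin n → ℝ) :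
    ‖∑ j, c j • η (a * t j)‖ ^ 2 = ‖∑ j, (a ^ (α / 2) * c j) • η (t j)‖ ^ 2 := by
  have hsq : (a ^ (α / 2)) ^ 2 = a ^ α := by
    rw [← Real.rpow_natCast, ← Real.rpow_mul ha]
    norm_num
  rw [norm_sum_mul_smul_sq, hsq]
  exact norm_sum_smul_sq_eq_of_inner_eq
    (fun i j => inner_comp_mul_of_fbmCovariance hcov ha (ht i) (ht j)) c

end FBmCovariance

theorem ggBm_self_similar_general
    {Ω : Type*} [MeasurableSpace Ω] (μ : Measure Ω)
    {H : Type*} [NormedAddCommGroup H] [InnerProductSpace ℝ H]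
    (d : ℕ) (β α : ℝ)
    (η : ℝ → H)
    (hcov : ∀ t s : ℝ, 0 ≤ t → 0 ≤ s →
      (inner ℝ (η t) (η s) : ℝ) = (1 / 2) * (t ^ α + s ^ α - |t - s| ^ α))
    (B : ℝ → Ω → Fin d → ℝ)
    (hchar : ∀ (n : ℕ) (t : Fin n → ℝ), (∀ j, 0 ≤ t j) → ∀ k : Fin n → Fin d → ℝ,
      ∫ w, Complex.exp (Complex.I * ((∑ j, ∑ i, k j i * B (t j) w i : ℝ) : ℂ)) ∂μ =
        mittagLeffler β
          (-(((1 / 2) * ∑ i : Fin d, ‖∑ j, k j i • η (t j)‖ ^ 2 : ℝ) : ℂ)))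
    (a : ℝ) (ha : 0 < a) :
    ∀ (n : ℕ) (t : Fin n → ℝ), (∀ j, 0 ≤ t j) → ∀ k : Fin n → Fin d → ℝ,
      ∫ w, Complex.exp (Complex.I * ((∑ j, ∑ i, k j i * B (a * t j) w i : ℝ) : ℂ)) ∂μ =
      ∫ w, Complex.exp
          (Complex.I * ((∑ j, ∑ i, k j i * (a ^ (α / 2) * B (t j) w i) : ℝ) : ℂ)) ∂μ := by
  intro n t ht k
  have hscaled : ∀ w, (∑ j, ∑ i, k j i * (a ^ (α / 2) * B (t j) w i) : ℝ) =
      ∑ j, ∑ i, (a ^ (α / 2) * k j i) * B (t j) w i := fun w =>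
    sum_congr rfl fun j _ => sum_congr rfl fun i _ => by ring
  simp_rw [hscaled]
  rw [hchar n (fun j => a * t j) (fun j => mul_nonneg ha.le (ht j)) k,
    hchar n t ht fun j i => a ^ (α / 2) * k j i]
  simp_rw [norm_sum_smul_comp_mul_sq_of_fbmCovariance hcov ht ha.le]

/-- The `d`-dimensional generalized grey Brownian motion is `α/2` self-similar in
distribution: if `B : ℝ → Ω → (Fin d → ℝ)` is a process on a probability space whose
finite-dimensional characteristic functions are given by the Mittag-Leffler functional
`E_β(-½ ∑ᵢ |∑ⱼ kⱼᵢ η(tⱼ)|²)` where `η t = M_-^{α/2}1_{[0,t)}` satisfies the fBm covariance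
identity, then the finite-dimensional characteristic functions of `(B(a t₁),…,B(a tₙ))` and
`(a^{α/2} B(t₁),…,a^{α/2} B(tₙ))` coincide. -/
theorem ggBm_self_similar
    {Ω : Type*} [MeasurableSpace Ω] (μ : Measure Ω) [IsProbabilityMeasure μ]
    {H : Type*} [NormedAddCommGroup H] [InnerProductSpace ℝ H]
    (d : ℕ) (β α : ℝ) (hβ₀ : 0 < β) (hβ₁ : β ≤ 1) (hα₀ : 0 < α) (hα₂ : α < 2)
    (η : ℝ → H)
    (hcov : ∀ t s : ℝ, 0 ≤ t → 0 ≤ s →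
      (inner ℝ (η t) (η s) : ℝ) = (1 / 2) * (t ^ α + s ^ α - |t - s| ^ α))
    (B : ℝ → Ω → Fin d → ℝ)
    (hchar : ∀ (n : ℕ) (t : Fin n → ℝ), (∀ j, 0 ≤ t j) → ∀ k : Fin n → Fin d → ℝ,
      ∫ w, Complex.exp (Complex.I * ((∑ j, ∑ i, k j i * B (t j) w i : ℝ) : ℂ)) ∂μ =
        mittagLeffler β
          (-(((1 / 2) * ∑ i : Fin d, ‖∑ j, k j i • η (t j)‖ ^ 2 : ℝ) : ℂ)))
    (a : ℝ) (ha : 0 < a) :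
    ∀ (n : ℕ) (t : Fin n → ℝ), (∀ j, 0 ≤ t j) → ∀ k : Fin n → Fin d → ℝ,
      ∫ w, Complex.exp (Complex.I * ((∑ j, ∑ i, k j i * B (a * t j) w i : ℝ) : ℂ)) ∂μ =
      ∫ w, Complex.exp
          (Complex.I * ((∑ j, ∑ i, k j i * (a ^ (α / 2) * B (t j) w i) : ℝ) : ℂ)) ∂μ :=
  ggBm_self_similar_general μ d β α η hcov B hchar a ha
end

section
/- Let X be a real random variable with characteristic function t ↦ E_β(−½ t² σ²) for some σ > 0 and 0 < β < 1. Then X is not Gaussian; equivalently, E_β(−½ t² σ²) ≠ exp(−½ c t²) for every constant c ≥ 0. -/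
open Real Filter Set intervalIntegral


lemma gamma_ge_factorial {β : ℝ} (n : ℕ) (hn : 1 ≤ β * n) :
    ((Nat.floor (β * n)).factorial : ℝ) ≤ Real.Gamma (β * n + 1) := by
  set m := Nat.floor (β * n) with hm
  have hm1 : 1 ≤ m := Nat.le_floor (by exact_mod_cast hn)
  have hm1' : (1 : ℝ) ≤ m := by exact_mod_cast hm1
  have hmle : (m : ℝ) ≤ β * n := Nat.floor_le (by positivity)
  have h1 : Real.Gamma ((m : ℝ) + 1) ≤ Real.Gamma (β * n + 1) := by
    rcases eq_or_lt_of_le hmle with h | h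
    · rw [h]
    · exact le_of_lt (Real.Gamma_strictMonoOn_Ici (by simp only [Set.mem_Ici]; linarith)
        (by simp only [Set.mem_Ici]; linarith) (by linarith))
  calc (m.factorial : ℝ) = Real.Gamma ((m : ℝ) + 1) := (Real.Gamma_nat_eq_factorial m).symm
    _ ≤ _ := h1

lemma factorial_ge {R : ℝ} (hR : 0 ≤ R) (m : ℕ) : R ^ m ≤ (m.factorial : ℝ) * Real.exp R := by
  have h := Real.sum_le_exp_of_nonneg hR (m + 1)
  have h2 : R ^ m / m.factorial ≤ Real.exp R := by
    refine le_trans ?_ h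
    exact Finset.single_le_sum (f := fun i => R ^ i / (i.factorial : ℝ))
      (fun i _ => by positivity) (Finset.self_mem_range_succ m)
  have hfac : (0:ℝ) < m.factorial := by exact_mod_cast m.factorial_pos
  calc R ^ m = (R ^ m / m.factorial) * m.factorial := by field_simp
    _ ≤ Real.exp R * m.factorial := by gcongr
    _ = m.factorial * Real.exp R := mul_comm _ _

lemma summable_ml_abs {β : ℝ} (hβ : 0 < β) (x : ℝ) (hx : 0 ≤ x) :
    Summable (fun n : ℕ => x ^ n / Real.Gamma (β * n + 1)) := by
  obtain ⟨R, hR1, hRx⟩ : ∃ R : ℝ, 1 ≤ R ∧ 2 * x ≤ R ^ β := by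
    refine ⟨max 1 ((2 * x + 1) ^ (1 / β)), le_max_left _ _, ?_⟩
    have h1 : (2 * x + 1) ^ (1 / β) ≤ max 1 ((2 * x + 1) ^ (1 / β)) := le_max_right _ _
    have h0 : (0:ℝ) ≤ (2 * x + 1) ^ (1 / β) := Real.rpow_nonneg (by linarith) _
    calc 2 * x ≤ 2 * x + 1 := by linarith
      _ = ((2 * x + 1) ^ (1 / β)) ^ β := by
          rw [← Real.rpow_mul (by linarith), one_div_mul_cancel hβ.ne', Real.rpow_one]
      _ ≤ _ := Real.rpow_le_rpow h0 h1 hβ.le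
  have hR0 : (0:ℝ) < R := lt_of_lt_of_le one_pos hR1
  have hRb : (0:ℝ) < R ^ β := Real.rpow_pos_of_pos hR0 _
  obtain ⟨N, hN⟩ : ∃ N : ℕ, 1 ≤ β * N := by
    obtain ⟨N, hN⟩ := exists_nat_ge (1 / β)
    refine ⟨N, ?_⟩
    rw [div_le_iff₀ hβ] at hN
    nlinarith
  rw [← summable_nat_add_iff N]
  set r : ℝ := x / R ^ β with hr
  have hr0 : 0 ≤ r := by positivity
  have hr1 : r < 1 := by
    rw [hr, div_lt_one hRb]; nlinarith
  have key : ∀ n : ℕ, x ^ (n + N) / Real.Gamma (β * (n + N : ℕ) + 1)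
      ≤ (Real.exp R * R) * r ^ (n + N) := by
    intro n
    have hβn : 1 ≤ β * ((n + N : ℕ) : ℝ) := by
      have : (N:ℝ) ≤ ((n + N : ℕ) : ℝ) := by exact_mod_cast Nat.le_add_left N n
      nlinarith [hβ.le]
    have hG : ((Nat.floor (β * ((n + N : ℕ):ℝ))).factorial : ℝ)
        ≤ Real.Gamma (β * ((n + N : ℕ):ℝ) + 1) := gamma_ge_factorial _ hβn
    have hGpos : 0 < Real.Gamma (β * ((n + N : ℕ):ℝ) + 1) :=
      Real.Gamma_pos_of_pos (by nlinarith)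
    set m := Nat.floor (β * ((n + N : ℕ):ℝ)) with hm
    have hfac : R ^ m ≤ (m.factorial : ℝ) * Real.exp R := factorial_ge hR0.le m
    have hmge : β * ((n + N : ℕ):ℝ) - 1 ≤ (m : ℝ) :=
      le_of_lt (Nat.sub_one_lt_floor _)
    have hRm : R ^ (β * ((n + N : ℕ):ℝ) - 1) ≤ R ^ (m : ℝ) :=
      Real.rpow_le_rpow_of_exponent_le hR1 hmge
    rw [Real.rpow_natCast] at hRm
    have h3 : R ^ (β * ((n + N : ℕ):ℝ) - 1) = (R ^ β) ^ (n + N) / R := by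
      rw [Real.rpow_sub hR0, Real.rpow_one, ← Real.rpow_natCast (R ^ β) (n + N),
        ← Real.rpow_mul hR0.le]
    have h5 : (R ^ β) ^ (n + N) ≤ (m.factorial : ℝ) * Real.exp R * R := by
      have h4 : (R ^ β) ^ (n + N) / R ≤ (m.factorial : ℝ) * Real.exp R := by
        rw [← h3]; exact le_trans hRm hfac
      calc (R ^ β) ^ (n + N) = (R ^ β) ^ (n + N) / R * R := by field_simp
        _ ≤ _ := by gcongr
    have hfp : (0:ℝ) < (m.factorial : ℝ) := by exact_mod_cast m.factorial_pos
    have hxp : (0:ℝ) ≤ x ^ (n + N) := by positivity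
    calc x ^ (n + N) / Real.Gamma (β * ((n + N : ℕ):ℝ) + 1)
        ≤ x ^ (n + N) / (m.factorial : ℝ) := by gcongr
      _ ≤ Real.exp R * R * r ^ (n + N) := by
          rw [hr, div_pow, mul_div_assoc', div_le_div_iff₀ hfp (by positivity)]
          nlinarith [pow_nonneg hx (n + N), pow_pos hRb (n + N)]
  refine Summable.of_nonneg_of_le (fun n => by positivity) key ?_
  have : Summable (fun n : ℕ => (Real.exp R * R * r ^ N) * r ^ n) :=
    (summable_geometric_of_lt_one hr0 hr1).mul_left _
  refine this.congr fun n => ?_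
  rw [pow_add]; ring


set_option maxHeartbeats 2000000 in
lemma remainder_bound (a : ℕ → ℝ) (hs : Summable (fun n => |a n|)) {u : ℝ}
    (hu0 : 0 < u) (hu1 : u ≤ 1) :
    |(∑' n, a n * u ^ n) - a 0 - a 1 * u - a 2 * u ^ 2| ≤ (∑' n, |a (n + 3)|) * u ^ 3 := by
  have hsum : Summable (fun n => a n * u ^ n) := by
    refine Summable.of_abs (Summable.of_nonneg_of_le (fun n => abs_nonneg _) (fun n => ?_) hs)
    rw [abs_mul, abs_pow, abs_of_pos hu0]
    calc |a n| * u ^ n ≤ |a n| * 1 := by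
          refine mul_le_mul_of_nonneg_left ?_ (abs_nonneg _)
          exact pow_le_one₀ hu0.le hu1
      _ = |a n| := mul_one _
  have hshift : Summable (fun n => a (n + 3) * u ^ (n + 3)) :=
    ((summable_nat_add_iff 3).mpr hsum)
  have hsplit := Summable.sum_add_tsum_nat_add 3 hsum
  have hrange : ∑ i ∈ Finset.range 3, a i * u ^ i = a 0 + a 1 * u + a 2 * u ^ 2 := by
    simp [Finset.sum_range_succ]
  have heq : (∑' n, a n * u ^ n) - a 0 - a 1 * u - a 2 * u ^ 2
      = ∑' n, a (n + 3) * u ^ (n + 3) := by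
    rw [← hsplit, hrange]; ring
  rw [heq]
  have hg : HasSum (fun n => |a (n + 3)| * u ^ 3) ((∑' n, |a (n + 3)|) * u ^ 3) :=
    (((summable_nat_add_iff 3).mpr hs).hasSum).mul_right _
  rw [← Real.norm_eq_abs]
  refine tsum_of_norm_bounded hg (fun n => ?_)
  rw [Real.norm_eq_abs, abs_mul, abs_pow, abs_of_pos hu0]
  refine mul_le_mul_of_nonneg_left ?_ (abs_nonneg _)
  calc u ^ (n + 3) = u ^ n * u ^ 3 := by ring
    _ ≤ 1 * u ^ 3 := mul_le_mul_of_nonneg_right (pow_le_one₀ hu0.le hu1) (by positivity)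
    _ = u ^ 3 := one_mul _

lemma tendsto_first (a : ℕ → ℝ) (hs : Summable (fun n => |a n|)) (F : ℝ → ℝ)
    (hF : ∀ u ∈ Ioc (0:ℝ) 1, F u = ∑' n, a n * u ^ n) :
    Tendsto (fun u => (F u - a 0) / u) (nhdsWithin 0 (Ioi 0)) (nhds (a 1)) := by
  set C := ∑' n, |a (n + 3)| with hC
  have hC0 : 0 ≤ C := tsum_nonneg fun n => abs_nonneg _
  rw [← tendsto_sub_nhds_zero_iff]
  have hbd : ∀ᶠ u in nhdsWithin (0:ℝ) (Ioi 0),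
      ‖(F u - a 0) / u - a 1‖ ≤ (C + |a 2|) * u := by
    filter_upwards [Ioc_mem_nhdsGT one_pos] with u hu
    obtain ⟨hu0, hu1⟩ := hu
    have hrem := remainder_bound a hs hu0 hu1
    rw [← hF u ⟨hu0, hu1⟩] at hrem
    have h1 : (F u - a 0) / u - a 1 = (F u - a 0 - a 1 * u - a 2 * u ^ 2) / u + a 2 * u := by
      field_simp; ring
    rw [h1, Real.norm_eq_abs]
    calc |(F u - a 0 - a 1 * u - a 2 * u ^ 2) / u + a 2 * u|
        ≤ |(F u - a 0 - a 1 * u - a 2 * u ^ 2) / u| + |a 2 * u| := abs_add_le _ _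
      _ ≤ C * u ^ 2 + |a 2| * u := by
          gcongr
          · rw [abs_div, abs_of_pos hu0, div_le_iff₀ hu0]
            calc |F u - a 0 - a 1 * u - a 2 * u ^ 2| ≤ C * u ^ 3 := hrem
              _ = C * u ^ 2 * u := by ring
          · rw [abs_mul, abs_of_pos hu0]
      _ ≤ (C + |a 2|) * u := by
          have hu2 : u ^ 2 ≤ u := by nlinarith
          nlinarith [mul_le_mul_of_nonneg_left hu2 hC0]
  have hlim : Tendsto (fun u : ℝ => (C + |a 2|) * u) (nhdsWithin 0 (Ioi 0)) (nhds 0) := by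
    have h3 : Tendsto (fun u : ℝ => (C + |a 2|) * u) (nhdsWithin (0:ℝ) (Ioi 0))
        (nhds ((C + |a 2|) * 0)) :=
      ((continuous_const.mul continuous_id).tendsto 0).mono_left nhdsWithin_le_nhds
    simpa using h3
  exact squeeze_zero_norm' hbd hlim

lemma tendsto_second (a : ℕ → ℝ) (hs : Summable (fun n => |a n|)) (F : ℝ → ℝ)
    (hF : ∀ u ∈ Ioc (0:ℝ) 1, F u = ∑' n, a n * u ^ n) :
    Tendsto (fun u => (F u - a 0 - a 1 * u) / u ^ 2) (nhdsWithin 0 (Ioi 0)) (nhds (a 2)) := by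
  set C := ∑' n, |a (n + 3)| with hC
  have hC0 : 0 ≤ C := tsum_nonneg fun n => abs_nonneg _
  rw [← tendsto_sub_nhds_zero_iff]
  have hbd : ∀ᶠ u in nhdsWithin (0:ℝ) (Ioi 0),
      ‖(F u - a 0 - a 1 * u) / u ^ 2 - a 2‖ ≤ C * u := by
    filter_upwards [Ioc_mem_nhdsGT one_pos] with u hu
    obtain ⟨hu0, hu1⟩ := hu
    have hrem := remainder_bound a hs hu0 hu1
    rw [← hF u ⟨hu0, hu1⟩] at hrem
    have h1 : (F u - a 0 - a 1 * u) / u ^ 2 - a 2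
        = (F u - a 0 - a 1 * u - a 2 * u ^ 2) / u ^ 2 := by
      field_simp
    rw [h1, Real.norm_eq_abs, abs_div, abs_pow, abs_of_pos hu0, div_le_iff₀ (by positivity)]
    calc |F u - a 0 - a 1 * u - a 2 * u ^ 2| ≤ C * u ^ 3 := hrem
      _ = C * u * u ^ 2 := by ring
  have hlim : Tendsto (fun u : ℝ => C * u) (nhdsWithin 0 (Ioi 0)) (nhds 0) := by
    have h3 : Tendsto (fun u : ℝ => C * u) (nhdsWithin (0:ℝ) (Ioi 0)) (nhds (C * 0)) :=
      ((continuous_const.mul continuous_id).tendsto 0).mono_left nhdsWithin_le_nhds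
    simpa using h3
  exact squeeze_zero_norm' hbd hlim


lemma key_ineq {β : ℝ} (hβ0 : 0 < β) (hβ1 : β < 1) : 3 < (2*β+1) * (4:ℝ)^(1-β) := by
  set u := 1 - β with hu'
  have hu : 0 < u := by simp [hu']; linarith
  have hu1 : u < 1 := by simp [hu']; linarith
  set a := Real.log 4 with ha'
  have ha : Real.log 4 = 2 * Real.log 2 := by
    rw [show (4:ℝ) = 2^2 by norm_num, Real.log_pow]; push_cast; ring
  have ha1 : 1.3862943606 < a := by
    rw [ha', ha]; linarith [Real.log_two_gt_d9]
  have ha2 : a < 1.3862943616 := by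
    rw [ha', ha]; linarith [Real.log_two_lt_d9]
  have hexp : 1 + a * u + (a * u) ^ 2 / 2 ≤ (4:ℝ) ^ u := by
    rw [Real.rpow_def_of_pos (by norm_num : (0:ℝ) < 4)]
    have h := Real.sum_le_exp_of_nonneg (by positivity : (0:ℝ) ≤ a * u) 3
    have hr : ∑ i ∈ Finset.range 3, (a*u) ^ i / (i.factorial : ℝ)
        = 1 + a * u + (a * u) ^ 2 / 2 := by
      simp [Finset.sum_range_succ]
    rw [hr] at h
    convert h using 2
  have h1 : 0 < 3 * a - 2 := by nlinarith
  have h2 : 0 < a - 2 + a ^ 2 / 2 := by nlinarith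
  have h3 : (0:ℝ) < 3 - 2 * u := by linarith
  have h4 : 3 < (3 - 2*u) * (1 + a * u + (a * u) ^ 2 / 2) := by
    nlinarith [mul_pos (mul_pos hu (sub_pos.2 hu1)) h1, mul_pos (mul_pos hu hu) h2,
      mul_nonneg (mul_nonneg (mul_nonneg hu.le hu.le) (sub_pos.2 hu1).le) (sq_nonneg a)]
  have : 2*β+1 = 3 - 2*u := by rw [hu']; ring
  rw [this]
  calc (3:ℝ) < (3 - 2*u) * (1 + a * u + (a * u) ^ 2 / 2) := h4
    _ ≤ (3 - 2*u) * (4:ℝ)^u := by gcongr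

lemma beta_real {β : ℝ} (hβ0 : 0 < β) :
    Real.Gamma (β+1) ^ 2 = Real.Gamma (2*β+2) * ∫ x in (0:ℝ)..1, x^β * (1-x)^β := by
  have hre : 0 < Complex.re ((β+1 : ℝ) : ℂ) := by simp; linarith
  have hcb := Complex.Gamma_mul_Gamma_eq_betaIntegral hre hre
  have hbi : Complex.betaIntegral ((β+1 : ℝ) : ℂ) ((β+1 : ℝ) : ℂ)
      = ((∫ x in (0:ℝ)..1, x^β * (1-x)^β : ℝ) : ℂ) := by
    rw [Complex.betaIntegral, ← intervalIntegral.integral_ofReal]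
    refine intervalIntegral.integral_congr fun x hx => ?_
    rw [Set.uIcc_of_le (by norm_num : (0:ℝ) ≤ 1)] at hx
    obtain ⟨hx0, hx1⟩ := hx
    push_cast
    rw [Complex.ofReal_cpow hx0, Complex.ofReal_cpow (by linarith : (0:ℝ) ≤ 1 - x)]
    push_cast
    ring_nf
  rw [hbi] at hcb
  have hsum : ((β+1 : ℝ) : ℂ) + ((β+1 : ℝ) : ℂ) = ((2*β+2 : ℝ) : ℂ) := by push_cast; ring
  rw [hsum, Complex.Gamma_ofReal, Complex.Gamma_ofReal] at hcb
  have : ((Real.Gamma (β+1) ^ 2 : ℝ) : ℂ)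
      = ((Real.Gamma (2*β+2) * ∫ x in (0:ℝ)..1, x^β * (1-x)^β : ℝ) : ℂ) := by
    push_cast
    rw [← hcb]; ring
  exact_mod_cast this

lemma gamma_lt {β : ℝ} (hβ0 : 0 < β) (hβ1 : β < 1) :
    Real.Gamma (2*β+1) < 2 * Real.Gamma (β+1) ^ 2 := by
  have hG1 : 0 < Real.Gamma (2*β+1) := Real.Gamma_pos_of_pos (by linarith)
  -- integral lower bound
  have hint : (4:ℝ)^(1-β) * (1/6) ≤ ∫ x in (0:ℝ)..1, x^β * (1-x)^β := by
    have hcont : ContinuousOn (fun x : ℝ => x^β * (1-x)^β) (Set.uIcc 0 1) := by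
      refine ContinuousOn.mul ?_ ?_
      · exact fun x _ => (Real.continuousAt_rpow_const x β (Or.inr hβ0.le)).continuousWithinAt
      · exact fun x _ => ((Real.continuousAt_rpow_const (1-x) β
          (Or.inr hβ0.le)).comp (by fun_prop)).continuousWithinAt
    have hmono : ∀ x ∈ Set.Icc (0:ℝ) 1, (4:ℝ)^(1-β) * (x * (1-x)) ≤ x^β * (1-x)^β := by
      intro x hx
      obtain ⟨hx0, hx1⟩ := hx
      have h1x : (0:ℝ) ≤ 1 - x := by linarith
      rw [← Real.mul_rpow hx0 h1x]
      set s := x * (1-x) with hs'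
      have hs0 : 0 ≤ s := mul_nonneg hx0 h1x
      have hs4 : s ≤ 1/4 := by rw [hs']; nlinarith [sq_nonneg (x - 1/2)]
      rcases eq_or_lt_of_le hs0 with h | h
      · rw [← h, Real.zero_rpow hβ0.ne', mul_zero]
      · have hinv : (4:ℝ) ≤ s⁻¹ := by
          rw [le_inv_comm₀ (by norm_num) h]; linarith
        have h2 : (4:ℝ)^(1-β) ≤ (s⁻¹)^(1-β) :=
          Real.rpow_le_rpow (by norm_num) hinv (by linarith)
        have h3 : (s⁻¹)^(1-β) * s = s ^ β := by
          rw [Real.inv_rpow hs0, ← Real.rpow_neg hs0, ← Real.rpow_add_one h.ne']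
          congr 1
          ring
        rw [← h3]
        exact mul_le_mul_of_nonneg_right h2 hs0 |>.trans_eq rfl
    have hi1 : IntervalIntegrable (fun x : ℝ => (4:ℝ)^(1-β) * (x * (1-x))) MeasureTheory.volume 0 1 := by
      apply Continuous.intervalIntegrable; fun_prop
    have hi2 : IntervalIntegrable (fun x : ℝ => x^β * (1-x)^β) MeasureTheory.volume 0 1 :=
      hcont.intervalIntegrable
    have := intervalIntegral.integral_mono_on (by norm_num : (0:ℝ) ≤ 1) hi1 hi2 hmono
    calc (4:ℝ)^(1-β) * (1/6) = ∫ x in (0:ℝ)..1, (4:ℝ)^(1-β) * (x * (1-x)) := by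
          rw [intervalIntegral.integral_const_mul]
          have : ∫ x in (0:ℝ)..1, x * (1-x) = ∫ x in (0:ℝ)..1, (x - x^2) :=
            intervalIntegral.integral_congr fun x _ => by ring
          rw [this, intervalIntegral.integral_sub intervalIntegrable_id (intervalIntegrable_pow 2),
            integral_id, integral_pow]
          norm_num
      _ ≤ _ := this
  have hbeta := beta_real hβ0
  have h22 : Real.Gamma (2*β+2) = (2*β+1) * Real.Gamma (2*β+1) := by
    have := Real.Gamma_add_one (show (2*β+1) ≠ 0 by linarith)
    rw [show 2*β+1+1 = 2*β+2 by ring] at this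
    linarith [this]
  have hkey := key_ineq hβ0 hβ1
  have h2b1 : (0:ℝ) < 2*β+1 := by linarith
  rw [h22] at hbeta
  nlinarith [mul_le_mul_of_nonneg_left hint (mul_pos h2b1 hG1).le]


/-- The Mittag-Leffler function `E_β(x) = ∑ xⁿ/Γ(βn+1)` (real version). -/
noncomputable def mittagLefflerReal (β : ℝ) (x : ℝ) : ℝ :=
  ∑' n : ℕ, x ^ n / Real.Gamma (β * n + 1)

/-- A random variable with characteristic function `t ↦ E_β(-½t²σ²)`, `0 < β < 1`, `σ > 0`,
is not Gaussian: `E_β(-½t²σ²)` cannot equal `exp(-½ct²)` for any constant `c ≥ 0`. -/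
theorem mittagLeffler_char_not_gaussian (β σ : ℝ) (hβ₀ : 0 < β) (hβ₁ : β < 1) (hσ : 0 < σ) :
    ∀ c : ℝ, 0 ≤ c →
      ∃ t : ℝ, mittagLefflerReal β (-(t ^ 2 * σ ^ 2 / 2)) ≠ Real.exp (-(c * t ^ 2 / 2)) := by
  intro c hc
  by_contra hcon
  push_neg at hcon
  set k := c / σ ^ 2 with hk'
  have hσ2 : (0:ℝ) < σ ^ 2 := by positivity
  have hk0 : 0 ≤ k := div_nonneg hc hσ2.le
  -- coefficient sequences
  set a : ℕ → ℝ := fun n => (-1) ^ n / Real.Gamma (β * n + 1) with ha'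
  set b : ℕ → ℝ := fun n => (-k) ^ n / (n.factorial : ℝ) with hb'
  have hGpos : ∀ n : ℕ, 0 < Real.Gamma (β * n + 1) :=
    fun n => Real.Gamma_pos_of_pos (by positivity)
  have hsa : Summable (fun n => |a n|) := by
    refine (summable_ml_abs hβ₀ 1 zero_le_one).congr fun n => ?_
    simp [ha', abs_div, abs_of_pos (hGpos n)]
  have hsb : Summable (fun n => |b n|) := by
    refine (Real.summable_pow_div_factorial k).congr fun n => ?_
    rw [hb', abs_div, abs_pow, abs_neg, abs_of_nonneg hk0, Nat.abs_cast]
  -- series representations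
  have hFa : ∀ u ∈ Ioc (0:ℝ) 1, mittagLefflerReal β (-u) = ∑' n, a n * u ^ n := by
    intro u _
    refine tsum_congr fun n => ?_
    rw [ha', neg_pow]
    ring
  have hFb : ∀ u ∈ Ioc (0:ℝ) 1, Real.exp (-(k * u)) = ∑' n, b n * u ^ n := by
    intro u _
    rw [Real.exp_eq_exp_ℝ, NormedSpace.exp_eq_tsum_div]
    refine tsum_congr fun n => ?_
    rw [hb', show -(k * u) = (-k) * u by ring, mul_pow]
    ring
  -- the two functions agree on Ioc 0 1
  have heq : ∀ u ∈ Ioc (0:ℝ) 1, mittagLefflerReal β (-u) = Real.exp (-(k * u)) := by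
    intro u hu
    have hu0 := hu.1
    have ht := hcon (Real.sqrt (2 * u) / σ)
    have h2u : (0:ℝ) ≤ 2 * u := by linarith
    have ht2 : (Real.sqrt (2 * u) / σ) ^ 2 = 2 * u / σ ^ 2 := by
      rw [div_pow, Real.sq_sqrt h2u]
    rw [ht2] at ht
    have e1 : 2 * u / σ ^ 2 * σ ^ 2 / 2 = u := by field_simp
    have e2 : c * (2 * u / σ ^ 2) / 2 = k * u := by rw [hk']; field_simp
    rw [e1, e2] at ht
    exact ht
  have hmem : Ioc (0:ℝ) 1 ∈ nhdsWithin (0:ℝ) (Ioi 0) := Ioc_mem_nhdsGT one_pos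
  have ha0 : a 0 = 1 := by simp [ha', Real.Gamma_one]
  have hb0 : b 0 = 1 := by simp [hb']
  have hev : (fun u => (Real.exp (-(k * u)) - b 0) / u)
      =ᶠ[nhdsWithin (0:ℝ) (Ioi 0)] (fun u => (mittagLefflerReal β (-u) - a 0) / u) := by
    filter_upwards [hmem] with u hu
    rw [heq u hu, ha0, hb0]
  have h1 := tendsto_nhds_unique
    (tendsto_first a hsa (fun u => mittagLefflerReal β (-u)) hFa)
    ((tendsto_first b hsb (fun u => Real.exp (-(k * u))) hFb).congr' hev)
  -- a 1 = b 1
  have ha1 : a 1 = -(1 / Real.Gamma (β + 1)) := by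
    simp [ha']
    rw [neg_div, one_div]
  have hb1 : b 1 = -k := by simp [hb']
  have hkval : k = 1 / Real.Gamma (β + 1) := by
    rw [ha1, hb1] at h1; linarith
  have hev2 : (fun u => (Real.exp (-(k * u)) - b 0 - b 1 * u) / u ^ 2)
      =ᶠ[nhdsWithin (0:ℝ) (Ioi 0)] (fun u => (mittagLefflerReal β (-u) - a 0 - a 1 * u) / u ^ 2) := by
    filter_upwards [hmem] with u hu
    rw [heq u hu, ha0, hb0, h1]
  have h2 := tendsto_nhds_unique
    (tendsto_second a hsa (fun u => mittagLefflerReal β (-u)) hFa)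
    ((tendsto_second b hsb (fun u => Real.exp (-(k * u))) hFb).congr' hev2)
  have ha2 : a 2 = 1 / Real.Gamma (2 * β + 1) := by
    simp only [ha']
    push_cast
    rw [mul_comm β 2]
    norm_num
  have hb2 : b 2 = k ^ 2 / 2 := by
    simp only [hb']
    rw [show ((2:ℕ).factorial : ℝ) = 2 by norm_num [Nat.factorial]]
    ring
  rw [ha2, hb2, hkval] at h2
  have hG1 : 0 < Real.Gamma (β + 1) := Real.Gamma_pos_of_pos (by linarith)
  have hG2 : 0 < Real.Gamma (2 * β + 1) := Real.Gamma_pos_of_pos (by linarith)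
  have hfin : Real.Gamma (2 * β + 1) = 2 * Real.Gamma (β + 1) ^ 2 := by
    field_simp at h2
    nlinarith [h2]
  have := gamma_lt hβ₀ hβ₁
  nlinarith [this, hfin]
end
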